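/- For a language P ⊆ Σ* and M ⊆ P^⧢, the set M is closed under removal of a single shuffled P-factor if and only if it is closed under removal of arbitrary shuffled runs: SWF_P^{(1)}(M) ⊆ M if and only if SWF_P(M) ⊆ M. -/
import Mathlib


namespace ShuffleProj

variable {α : Type*}

/-- The shuffle of two words, defined inductively. -/
def shuffle : List α → List α → Set (List α)
  | u, [] => {u}
  | [], v => {v}
  | a :: u, b :: v =>
      (List.cons a) '' shuffle u (b :: v) ∪ (List.cons b) '' shuffle (a :: u) v
  termination_by u v => u.length + v.length

/-- The shuffle product of two languages. -/
def lshuffle (U V : Set (List α)) : Set (List α) :=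
  {w | ∃ u ∈ U, ∃ v ∈ V, w ∈ shuffle u v}

/-- `shufflePow P n` is `P^(⧢,n)`: `shufflePow P 1 = P ∪ {ε}` and
`shufflePow P (n+1) = shufflePow P n ⧢ (P ∪ {ε})`.  (`shufflePow P 0 = {ε}`
is a definitional device making these equations hold.) -/
def shufflePow (P : Set (List α)) : ℕ → Set (List α)
  | 0 => {[]}
  | n + 1 => lshuffle (shufflePow P n) (P ∪ {[]})

/-- The iterated shuffle `P^⧢ = ⋃_{n ≥ 1} P^(⧢,n)`. -/
def iterShuffle (P : Set (List α)) : Set (List α) :=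
  ⋃ n : ℕ, shufflePow P (n + 1)

/-- The set of prefixes of words of a language. -/
def pre (L : Set (List α)) : Set (List α) := {u | ∃ w ∈ L, u <+: w}

/-- The shuffle factors of `M ⊆ P^⧢`. -/
def SWF (P M : Set (List α)) : Set (List α) :=
  {u | u ∈ iterShuffle P ∧ ∃ w ∈ M, ∃ v ∈ iterShuffle P, w ∈ shuffle u v}

/-- `SWFn P n M`: shuffle factors of `M` with cofactor in `P^(⧢,n)`. -/
def SWFn (P : Set (List α)) (n : ℕ) (M : Set (List α)) : Set (List α) :=
  {u | u ∈ iterShuffle P ∧ ∃ w ∈ M, ∃ v ∈ shufflePow P n, w ∈ shuffle u v}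

theorem shuffle_nil_right (u : List α) : shuffle u ([] : List α) = {u} := by
  cases u <;> rw [shuffle]

theorem shuffle_nil_left (v : List α) : shuffle ([] : List α) v = {v} := by
  cases v <;> rw [shuffle] <;> simp

theorem shuffle_cons_cons (a b : α) (u v : List α) :
    shuffle (a :: u) (b :: v) =
      (List.cons a) '' shuffle u (b :: v) ∪ (List.cons b) '' shuffle (a :: u) v := by
  rw [shuffle]

theorem nil_mem_shuffle {a b : List α} (h : ([] : List α) ∈ shuffle a b) :
    a = [] ∧ b = [] := by
  match a, b with
  | [], b => rw [shuffle_nil_left] at h; exact ⟨rfl, h.symm⟩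
  | a, [] => rw [shuffle_nil_right] at h; exact ⟨h.symm, rfl⟩
  | x :: a, y :: b =>
    rw [shuffle_cons_cons] at h
    rcases h with ⟨w', _, he⟩ | ⟨w', _, he⟩ <;> exact absurd he (by simp)

theorem mem_shuffle_cons_left {w u v : List α} {a : α} (h : w ∈ shuffle u v) :
    a :: w ∈ shuffle (a :: u) v := by
  cases v with
  | nil => rw [shuffle_nil_right] at h ⊢; simp_all
  | cons b v => rw [shuffle_cons_cons]; exact Or.inl ⟨w, h, rfl⟩

theorem mem_shuffle_cons_right {w u v : List α} {b : α} (h : w ∈ shuffle u v) :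
    b :: w ∈ shuffle u (b :: v) := by
  cases u with
  | nil => rw [shuffle_nil_left] at h ⊢; simp_all
  | cons a u => rw [shuffle_cons_cons]; exact Or.inr ⟨w, h, rfl⟩

theorem cons_mem_shuffle {w a b : List α} {d : α} (h : d :: w ∈ shuffle a b) :
    (∃ a', a = d :: a' ∧ w ∈ shuffle a' b) ∨ (∃ b', b = d :: b' ∧ w ∈ shuffle a b') := by
  match a, b with
  | [], b =>
    rw [shuffle_nil_left] at h
    exact Or.inr ⟨w, h.symm, by rw [shuffle_nil_left]; rfl⟩
  | a, [] =>
    rw [shuffle_nil_right] at h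
    exact Or.inl ⟨w, h.symm, by rw [shuffle_nil_right]; rfl⟩
  | x :: a, y :: b =>
    rw [shuffle_cons_cons] at h
    rcases h with ⟨w', hw', he⟩ | ⟨w', hw', he⟩
    · obtain ⟨rfl, rfl⟩ : x = d ∧ w' = w := by
        constructor <;> (injection he <;> simp_all)
      exact Or.inl ⟨a, rfl, hw'⟩
    · obtain ⟨rfl, rfl⟩ : y = d ∧ w' = w := by
        constructor <;> (injection he <;> simp_all)
      exact Or.inr ⟨b, rfl, hw'⟩

theorem shuffle_assoc : ∀ (w u v a b : List α), w ∈ shuffle u v → v ∈ shuffle a b →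
    ∃ x, x ∈ shuffle u a ∧ w ∈ shuffle x b
  | w, [], v, a, b, hw, hv => by
    rw [shuffle_nil_left] at hw
    subst hw
    exact ⟨a, by rw [shuffle_nil_left]; rfl, hv⟩
  | w, u, [], a, b, hw, hv => by
    rw [shuffle_nil_right] at hw
    subst hw
    obtain ⟨rfl, rfl⟩ := nil_mem_shuffle hv
    exact ⟨w, by rw [shuffle_nil_right]; rfl, by rw [shuffle_nil_right]; rfl⟩
  | w, c :: u, d :: v, a, b, hw, hv => by
    rw [shuffle_cons_cons] at hw
    rcases hw with ⟨w', hw', rfl⟩ | ⟨w', hw', rfl⟩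
    · obtain ⟨x, hx, hwx⟩ := shuffle_assoc w' u (d :: v) a b hw' hv
      exact ⟨c :: x, mem_shuffle_cons_left hx, mem_shuffle_cons_left hwx⟩
    · rcases cons_mem_shuffle hv with ⟨a', rfl, hv'⟩ | ⟨b', rfl, hv'⟩
      · obtain ⟨x, hx, hwx⟩ := shuffle_assoc w' (c :: u) v a' b hw' hv'
        exact ⟨d :: x, mem_shuffle_cons_right hx, mem_shuffle_cons_left hwx⟩
      · obtain ⟨x, hx, hwx⟩ := shuffle_assoc w' (c :: u) v a b' hw' hv'
        exact ⟨x, hx, mem_shuffle_cons_right hwx⟩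
  termination_by w => w.length

theorem shufflePow_one (P : Set (List α)) : shufflePow P 1 = P ∪ {[]} := by
  ext w
  constructor
  · rintro ⟨u, hu, v, hv, hw⟩
    obtain rfl : u = [] := hu
    rw [shuffle_nil_left] at hw
    obtain rfl : w = v := hw
    exact hv
  · intro hw
    exact ⟨[], rfl, w, hw, by rw [shuffle_nil_left]; rfl⟩

theorem mem_shufflePow_add {P : Set (List α)} : ∀ {n : ℕ} {m : ℕ} {u v w : List α},
    u ∈ shufflePow P m → v ∈ shufflePow P n → w ∈ shuffle u v → w ∈ shufflePow P (m + n)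
  | 0, m, u, v, w, hu, hv, hw => by
    obtain rfl : v = [] := hv
    rw [shuffle_nil_right] at hw
    obtain rfl : w = u := hw
    exact hu
  | n + 1, m, u, v, w, hu, hv, hw => by
    obtain ⟨v1, hv1, v2, hv2, hv⟩ := hv
    obtain ⟨x, hx, hwx⟩ := shuffle_assoc w u v v1 v2 hw hv
    exact ⟨x, mem_shufflePow_add hu hv1 hx, v2, hv2, hwx⟩

theorem mem_iterShuffle_shuffle {P : Set (List α)} {n : ℕ} {u v w : List α}
    (hu : u ∈ iterShuffle P) (hv : v ∈ shufflePow P n) (hw : w ∈ shuffle u v) :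
    w ∈ iterShuffle P := by
  obtain ⟨_, ⟨m, rfl⟩, hu⟩ := hu
  have := mem_shufflePow_add (m := m + 1) hu hv hw
  rw [Nat.add_right_comm] at this
  exact Set.mem_iUnion.2 ⟨m + n, this⟩

/-- for `M ⊆ P^⧢`, closure under removal of a single shuffled
`P`-factor is equivalent to closure under removal of arbitrary shuffled runs:
`SWF_P^{(1)}(M) ⊆ M ↔ SWF_P(M) ⊆ M`. -/
theorem SWFn_one_subset_iff_SWF_subset (P M : Set (List α)) (hM : M ⊆ iterShuffle P) :
    SWFn P 1 M ⊆ M ↔ SWF P M ⊆ M := by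
  constructor
  · intro h1
    have key : ∀ n, SWFn P n M ⊆ M := by
      intro n
      induction n with
      | zero =>
        rintro u ⟨hu, w, hw, v, hv, hwuv⟩
        obtain rfl : v = [] := hv
        rw [shuffle_nil_right] at hwuv
        obtain rfl : w = u := hwuv
        exact hw
      | succ n ih =>
        rintro u ⟨hu, w, hw, v, hv, hwuv⟩
        obtain ⟨v1, hv1, v2, hv2, hv⟩ := hv
        obtain ⟨x, hx, hwx⟩ := shuffle_assoc w u v v1 v2 hwuv hv
        have hxit : x ∈ iterShuffle P := mem_iterShuffle_shuffle hu hv1 hx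
        have hxM : x ∈ M :=
          h1 ⟨hxit, w, hw, v2, (shufflePow_one P).symm ▸ hv2, hwx⟩
        exact ih ⟨hu, x, hxM, v1, hv1, hx⟩
    rintro u ⟨hu, w, hw, v, hv, hwuv⟩
    obtain ⟨_, ⟨n, rfl⟩, hv⟩ := hv
    exact key (n + 1) ⟨hu, w, hw, v, hv, hwuv⟩
  · rintro h u ⟨hu, w, hw, v, hv, hwuv⟩
    exact h ⟨hu, w, hw, v, Set.mem_iUnion.2 ⟨0, hv⟩, hwuv⟩

end ShuffleProj
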